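/- arXiv:2012.15498 — 2 statements merged into one kernel-verified Lean document; each statement's English description precedes it below -/
import Mathlib

section
/- Reverse Jensen inequality for the logarithm (scalar version): for any η ∈ (0,1), any probability vector p ∈ Δ (entries nonnegative, summing to 1) in ℝ^D, and any vector x ∈ ℝ_+^D, we have log⟨x,p⟩ ≤ (1/η)·Σ_d p_d·log((1-η) + η·x_d) + Σ_d log(1 + (η/(1-η))·x_d). -/
/-!
Put `r = η / (1 - η)`. Since `(1 - η) + η x = (1 - η) (1 + r x)` and `∑ p_d = 1`, the right-hand
side is `η⁻¹ log (1 - η) + ∑_d (1 + p_d / η) log (1 + r x_d)`. With `S = ⟨x, p⟩`, the weights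
`w_d = x_d p_d / S` sum to one, and concavity of `log` gives
`log (1 + r x_d) ≥ w_d log (1 + r S / p_d)`. So it suffices that
`log S ≤ η⁻¹ log (1 - η) + (1 + p / η) log (1 + r S / p)` for every `p > 0`, which follows by adding
three instances of `log y ≤ y - 1`.
-/

open Real

lemma mul_log_one_add_le_log_one_add_mul {a t : ℝ} (ha : 0 ≤ a) (ht0 : 0 ≤ t) (ht1 : t ≤ 1) :
    t * log (1 + a) ≤ log (1 + t * a) := by
  have h := strictConcaveOn_log_Ioi.concaveOn.2 (Set.mem_Ioi.2 one_pos)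
    (Set.mem_Ioi.2 (by linarith : (0 : ℝ) < 1 + a)) (sub_nonneg.2 ht1) ht0 (by ring)
  simp only [smul_eq_mul, log_one, mul_zero, zero_add, mul_one] at h
  exact h.trans_eq (congrArg log (by ring))

lemma one_sub_inv_mul_log_one_sub_le_one {η : ℝ} (hη0 : 0 < η) (hη1 : η < 1) :
    (1 - η⁻¹) * log (1 - η) ≤ 1 := by
  have hη1' : 0 < 1 - η := sub_pos.2 hη1
  have h := log_le_sub_one_of_pos (inv_pos.2 hη1')
  rw [log_inv] at h
  calc (1 - η⁻¹) * log (1 - η) = (1 - η) / η * -log (1 - η) := by field_simp; ring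
    _ ≤ (1 - η) / η * ((1 - η)⁻¹ - 1) := by gcongr
    _ = 1 := by field_simp; ring

lemma log_le_inv_mul_log_one_sub_add_mul_log_one_add {η p S : ℝ} (hη0 : 0 < η) (hη1 : η < 1)
    (hp : 0 < p) (hS : 0 < S) :
    log S ≤ η⁻¹ * log (1 - η) + (1 + p / η) * log (1 + η / (1 - η) * (S / p)) := by
  have hη1' : 0 < 1 - η := sub_pos.2 hη1
  set t := η / (1 - η) * (S / p) with ht_def
  set L := log (1 + t)
  have ht : 0 < t := by positivity
  have hL : t ≤ (1 + t) * L := by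
    have h := one_sub_inv_le_log_of_pos (by linarith : 0 < 1 + t)
    calc t = (1 + t) * (1 - (1 + t)⁻¹) := by field_simp; ring
      _ ≤ (1 + t) * L := by gcongr
  have hL0 : 0 < L := log_pos (by linarith)
  have hS_le : S ≤ (1 - η) * (1 + t) * (p * L / η) :=
    calc S = (1 - η) * t * p / η := by rw [ht_def]; field_simp
      _ ≤ (1 - η) * ((1 + t) * L) * p / η := by gcongr
      _ = (1 - η) * (1 + t) * (p * L / η) := by ring
  have h₁ : log S ≤ log (1 - η) + L + log (p * L / η) := by
    rw [← log_mul hη1'.ne' (by positivity), ← log_mul (by positivity) (by positivity)]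
    exact log_le_log hS hS_le
  have h₂ := log_le_sub_one_of_pos (show 0 < p * L / η by positivity)
  have h₃ := one_sub_inv_mul_log_one_sub_le_one hη0 hη1
  have h₄ : (1 + p / η) * L = L + p * L / η := by ring
  linarith

lemma mul_div_mul_sub_le_mul_log_one_add {η p x S : ℝ} (hη0 : 0 < η) (hη1 : η < 1) (hp : 0 ≤ p)
    (hx : 0 ≤ x) (hS : 0 < S) (hxp : x * p ≤ S) :
    x * p / S * (log S - η⁻¹ * log (1 - η)) ≤ (1 + p / η) * log (1 + η / (1 - η) * x) := by
  have hη1' : 0 < 1 - η := sub_pos.2 hη1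
  rcases (mul_nonneg hx hp).eq_or_lt with hxp0 | hxp0
  · rw [← hxp0, zero_div, zero_mul]
    exact mul_nonneg (by positivity) (log_nonneg (le_add_of_nonneg_right (by positivity)))
  have hp0 : 0 < p := pos_of_mul_pos_right hxp0 hx
  set w := x * p / S
  have hw : w * (η / (1 - η) * (S / p)) = η / (1 - η) * x := by
    simp only [w]; field_simp
  calc w * (log S - η⁻¹ * log (1 - η))
      ≤ w * ((1 + p / η) * log (1 + η / (1 - η) * (S / p))) := by
        refine mul_le_mul_of_nonneg_left ?_ (by positivity)
        linarith [log_le_inv_mul_log_one_sub_add_mul_log_one_add hη0 hη1 hp0 hS]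
    _ = (1 + p / η) * (w * log (1 + η / (1 - η) * (S / p))) := by ring
    _ ≤ (1 + p / η) * log (1 + η / (1 - η) * x) := by
        gcongr
        rw [← hw]
        exact mul_log_one_add_le_log_one_add_mul (by positivity) (by positivity)
          ((div_le_one hS).2 hxp)

theorem reverse_jensen_log_scalar (D : ℕ) (η : ℝ) (hη0 : 0 < η) (hη1 : η < 1)
    (p x : Fin D → ℝ) (hp : ∀ d, 0 ≤ p d) (hp1 : ∑ d, p d = 1)
    (hx : ∀ d, 0 ≤ x d) (hpos : 0 < ∑ d, x d * p d) :
    Real.log (∑ d, x d * p d) ≤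
      (1 / η) * ∑ d, p d * Real.log ((1 - η) + η * x d) +
        ∑ d, Real.log (1 + (η / (1 - η)) * x d) := by
  have hη1' : 0 < 1 - η := sub_pos.2 hη1
  set S := ∑ d, x d * p d
  have hsplit (d : Fin D) :
      log ((1 - η) + η * x d) = log (1 - η) + log (1 + η / (1 - η) * x d) := by
    have : 0 ≤ η / (1 - η) * x d := mul_nonneg (div_nonneg hη0.le hη1'.le) (hx d)
    rw [← log_mul hη1'.ne' (by linarith)]
    congr 1; field_simp
  have hweights : ∑ d, x d * p d / S = 1 := by rw [← Finset.sum_div, div_self hpos.ne']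
  calc log S = ∑ d, x d * p d / S * (log S - η⁻¹ * log (1 - η)) + η⁻¹ * log (1 - η) := by
        rw [← Finset.sum_mul, hweights]; ring
    _ ≤ ∑ d, (1 + p d / η) * log (1 + η / (1 - η) * x d) + η⁻¹ * log (1 - η) := by
        refine add_le_add (Finset.sum_le_sum fun d _ => ?_) le_rfl
        exact mul_div_mul_sub_le_mul_log_one_add hη0 hη1 (hp d) (hx d) hpos
          (Finset.single_le_sum (fun e _ => mul_nonneg (hx e) (hp e)) (Finset.mem_univ d))
    _ = 1 / η * ∑ d, p d * log ((1 - η) + η * x d) + ∑ d, log (1 + η / (1 - η) * x d) := by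
        have h : ∑ d, p d / η * log (1 + η / (1 - η) * x d)
            = η⁻¹ * ∑ d, p d * log (1 + η / (1 - η) * x d) := by
          rw [Finset.mul_sum]; exact Finset.sum_congr rfl fun _ _ => by ring
        simp only [hsplit, mul_add, add_mul, one_mul, Finset.sum_add_distrib, ← Finset.sum_mul, hp1,
          one_div]
        linarith
end

section
/- Reverse Jensen inequality for the logarithm (quantum version): for any η ∈ (0,1), any density matrix ρ ∈ 𝒟, and any Hermitian positive semi-definite X ∈ ℂ^{D×D} with tr(Xρ) > 0, we have log tr(Xρ) ≤ (1/η)·tr(ρ·log((1-η)I + ηX)) + tr(log(I + (η/(1-η))X)). -/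
/-
Diagonalise `X = U diag(x) U*`. Every matrix function in the statement is then a function of the
eigenvalues `xᵢ`, and the diagonal `pᵢ` of `U* ρ U` is a probability vector, so the claim reduces to
`log (∑ pᵢ xᵢ) ≤ η⁻¹ ∑ pᵢ log (1 - η + η xᵢ) + ∑ log (1 + vᵢ)` with `vᵢ = η xᵢ / (1 - η)`.
Since `1 - η + η xᵢ = (1 - η)(1 + vᵢ)`, concavity of `log (1 + ·)` on `[0, S]`, `S = ∑ vᵢ`, gives
`∑ pᵢ log (1 + vᵢ) ≥ (s / S) log (1 + S)` with `s = ∑ pᵢ vᵢ`; also `1 + S ≤ ∏ (1 + vᵢ)`; and the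
remaining scalar inequality in `s`, `S`, `η` is three instances of `log y ≤ y - 1`.
-/

open Matrix BigOperators
open scoped ComplexOrder

noncomputable def matFun {D : ℕ} (f : ℝ → ℝ) (A : Matrix (Fin D) (Fin D) ℂ) :
    Matrix (Fin D) (Fin D) ℂ :=
  if h : A.IsHermitian then
    (h.eigenvectorUnitary : Matrix (Fin D) (Fin D) ℂ) *
      Matrix.diagonal (fun i => (f (h.eigenvalues i) : ℂ)) *
      star (h.eigenvectorUnitary : Matrix (Fin D) (Fin D) ℂ)
  else 0

noncomputable def matLog {D : ℕ} : Matrix (Fin D) (Fin D) ℂ → Matrix (Fin D) (Fin D) ℂ :=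
  matFun Real.log

noncomputable def matExp {D : ℕ} : Matrix (Fin D) (Fin D) ℂ → Matrix (Fin D) (Fin D) ℂ :=
  matFun Real.exp

def IsDensity {D : ℕ} (ρ : Matrix (Fin D) (Fin D) ℂ) : Prop :=
  ρ.PosSemidef ∧ ρ.trace = 1

open Real Finset

lemma one_add_sum_le_prod_one_add {ι : Type*} (s : Finset ι) {v : ι → ℝ}
    (hv : ∀ j ∈ s, 0 ≤ v j) : 1 + ∑ j ∈ s, v j ≤ ∏ j ∈ s, (1 + v j) := by
  induction s using Finset.cons_induction with
  | empty => simp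
  | cons a s ha ih =>
    have hs : ∀ j ∈ s, 0 ≤ v j := fun j hj => hv j (mem_cons_of_mem hj)
    rw [sum_cons, prod_cons]
    nlinarith [ih hs, sum_nonneg hs, hv a (mem_cons_self a s)]

lemma log_one_add_sum_le_sum_log_one_add {ι : Type*} (s : Finset ι) {v : ι → ℝ}
    (hv : ∀ j ∈ s, 0 ≤ v j) : log (1 + ∑ j ∈ s, v j) ≤ ∑ j ∈ s, log (1 + v j) := by
  rw [← log_prod fun j hj => by linarith [hv j hj]]
  exact log_le_log (by linarith [sum_nonneg hv]) (one_add_sum_le_prod_one_add s hv)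

lemma div_mul_log_one_add_le_log_one_add {v S : ℝ} (hv : 0 ≤ v) (hvS : v ≤ S) :
    v / S * log (1 + S) ≤ log (1 + v) := by
  rcases (hv.trans hvS).eq_or_lt with rfl | hS
  · simpa using log_nonneg (by linarith : (1 : ℝ) ≤ 1 + v)
  have hθ : v / S ≤ 1 := (div_le_one hS).mpr hvS
  have hconc := strictConcaveOn_log_Ioi.concaveOn.2 (show (1 : ℝ) ∈ Set.Ioi 0 by norm_num)
    (show 1 + S ∈ Set.Ioi 0 by simp; linarith) (show 0 ≤ 1 - v / S by linarith)
    (show 0 ≤ v / S by positivity) (by ring)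
  have hpt : 1 - v / S + v / S * (1 + S) = 1 + v := by field_simp; ring
  simpa [hpt] using hconc

lemma log_le_log_add_mul_log_one_sub_add_mul_log_one_add {η s S : ℝ} (hη0 : 0 < η)
    (hη1 : η < 1) (hs : 0 < s) (hS : 0 < S) :
    log s ≤ log η + (1 - η) / η * log (1 - η) + (1 + s / (η * S)) * log (1 + S) := by
  have h1S : 0 < 1 + S := by linarith
  have h1η : 0 < 1 - η := by linarith
  have hy := log_le_sub_one_of_pos (show 0 < s / (η * (1 + S)) by positivity)
  rw [log_div hs.ne' (by positivity), log_mul hη0.ne' h1S.ne'] at hy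
  have hS' : s / (η * (1 + S)) ≤ s / (η * S) * log (1 + S) := by
    calc s / (η * (1 + S)) = s / (η * S) * (1 - (1 + S)⁻¹) := by field_simp; ring
      _ ≤ s / (η * S) * log (1 + S) := by gcongr; exact one_sub_inv_le_log_of_pos h1S
  have hη : -1 ≤ (1 - η) / η * log (1 - η) := by
    calc (-1 : ℝ) = (1 - η) / η * (1 - (1 - η)⁻¹) := by field_simp; ring
      _ ≤ (1 - η) / η * log (1 - η) := by gcongr; exact one_sub_inv_le_log_of_pos h1η
  linarith

theorem reverse_jensen_log {ι : Type*} [Fintype ι] {η : ℝ} (hη0 : 0 < η) (hη1 : η < 1)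
    {p x : ι → ℝ} (hp : ∀ j, 0 ≤ p j) (hp1 : ∑ j, p j = 1) (hx : ∀ j, 0 ≤ x j)
    (ht : 0 < ∑ j, p j * x j) :
    log (∑ j, p j * x j) ≤
      1 / η * ∑ j, p j * log (1 - η + η * x j) + ∑ j, log (1 + η / (1 - η) * x j) := by
  have h1η : 0 < 1 - η := by linarith
  set v : ι → ℝ := fun j => η / (1 - η) * x j with hv
  have hv0 : ∀ j, 0 ≤ v j := fun j => mul_nonneg (by positivity) (hx j)
  set s := ∑ j, p j * v j
  set S := ∑ j, v j
  have hvS : ∀ j, v j ≤ S := fun j => single_le_sum (fun i _ => hv0 i) (mem_univ j)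
  have hts : ∑ j, p j * x j = (1 - η) / η * s := by
    simp only [s, hv, mul_sum]
    exact sum_congr rfl fun j _ => by field_simp
  have hs : 0 < s := pos_of_mul_pos_right (hts ▸ ht) (by positivity)
  have hsS : s ≤ S := sum_le_sum fun j _ =>
    mul_le_of_le_one_left (hv0 j) (hp1 ▸ single_le_sum (fun i _ => hp i) (mem_univ j))
  have hsplit : ∑ j, p j * log (1 - η + η * x j) = log (1 - η) + ∑ j, p j * log (1 + v j) := by
    have hfac : ∀ j, log (1 - η + η * x j) = log (1 - η) + log (1 + v j) := fun j => by
      rw [← log_mul h1η.ne' (by linarith [hv0 j])]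
      congr 1
      simp only [hv]; field_simp
    simp_rw [hfac, mul_add, sum_add_distrib, ← sum_mul, hp1, one_mul]
  have hchord : s / S * log (1 + S) ≤ ∑ j, p j * log (1 + v j) := by
    rw [sum_div, sum_mul]
    exact sum_le_sum fun j _ => by
      rw [mul_div_assoc, mul_assoc]
      exact mul_le_mul_of_nonneg_left (div_mul_log_one_add_le_log_one_add (hv0 j) (hvS j)) (hp j)
  have hprod : log (1 + S) ≤ ∑ j, log (1 + v j) :=
    log_one_add_sum_le_sum_log_one_add _ fun j _ => hv0 j
  have hkey := log_le_log_add_mul_log_one_sub_add_mul_log_one_add hη0 hη1 hs (hs.trans_le hsS)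
  rw [hts, log_mul (by positivity) hs.ne', log_div h1η.ne' hη0.ne', hsplit]
  have hchord' := mul_le_mul_of_nonneg_left hchord (by positivity : 0 ≤ 1 / η)
  have e1 : 1 / η * log (1 - η) = log (1 - η) + (1 - η) / η * log (1 - η) := by field_simp; ring
  have e2 : 1 / η * (s / S * log (1 + S)) = s / (η * S) * log (1 + S) := by field_simp
  linarith

namespace Matrix.IsHermitian

variable {n 𝕜 : Type*} [Fintype n] [DecidableEq n] [RCLike 𝕜] {A : Matrix n n 𝕜}

lemma cfc_comp_affine (hA : A.IsHermitian) (f : ℝ → ℝ) (a b : ℝ) :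
    cfc (fun x => f (a + b * x)) A = cfc f (algebraMap ℝ _ a + b • A) := by
  rw [cfc_comp' f (fun x => a + b * x) A ((A.finite_real_spectrum.image _).continuousOn _),
    cfc_const_add a _ A, cfc_const_mul_id b A]

lemma trace_mul_cfc (hA : A.IsHermitian) (B : Matrix n n 𝕜) (f : ℝ → ℝ) :
    (B * cfc f A).trace = ∑ i, (star (hA.eigenvectorUnitary : Matrix n n 𝕜) * B *
      hA.eigenvectorUnitary) i i * f (hA.eigenvalues i) := by
  rw [hA.cfc_eq, IsHermitian.cfc, Unitary.conjStarAlgAut_apply, ← mul_assoc, trace_mul_cycle,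
    ← mul_assoc]
  simp [trace, mul_diagonal]

lemma trace_cfc (hA : A.IsHermitian) (f : ℝ → ℝ) :
    (cfc f A).trace = ∑ i, (f (hA.eigenvalues i) : 𝕜) := by
  simpa [Unitary.star_mul_self_of_mem hA.eigenvectorUnitary.2] using hA.trace_mul_cfc 1 f

end Matrix.IsHermitian

lemma matFun_eq_cfc {D : ℕ} (f : ℝ → ℝ) {A : Matrix (Fin D) (Fin D) ℂ} (hA : A.IsHermitian) :
    matFun f A = cfc f A := by
  rw [matFun, dif_pos hA, hA.cfc_eq, IsHermitian.cfc, Unitary.conjStarAlgAut_apply]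
  rfl

lemma matFun_algebraMap_add_smul {D : ℕ} (f : ℝ → ℝ) {X : Matrix (Fin D) (Fin D) ℂ}
    (hX : X.IsHermitian) (a b : ℝ) :
    matFun f (algebraMap ℝ _ a + b • X) = cfc (fun x => f (a + b * x)) X := by
  rw [hX.cfc_comp_affine, matFun_eq_cfc]
  exact (IsSelfAdjoint.algebraMap _ (.all a)).add ((IsSelfAdjoint.all b).smul hX.isSelfAdjoint)

namespace IsDensity

variable {D : ℕ} {ρ : Matrix (Fin D) (Fin D) ℂ}

lemma conj_unitary (hρ : IsDensity ρ) (U : unitaryGroup (Fin D) ℂ) :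
    IsDensity (star (U : Matrix (Fin D) (Fin D) ℂ) * ρ * (U : Matrix (Fin D) (Fin D) ℂ)) :=
  ⟨hρ.1.conjTranspose_mul_mul_same _,
    by rw [trace_mul_cycle, Unitary.mul_star_self_of_mem U.2, one_mul, hρ.2]⟩

lemma re_diag_nonneg (hρ : IsDensity ρ) (i : Fin D) : 0 ≤ (ρ i i).re :=
  (Complex.le_def.mp (hρ.1.diag_nonneg)).1

lemma sum_re_diag (hρ : IsDensity ρ) : ∑ i, (ρ i i).re = 1 := by
  simpa [trace] using congrArg Complex.re hρ.2

end IsDensity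

theorem reverse_jensen_log_quantum (D : ℕ) (η : ℝ) (hη0 : 0 < η) (hη1 : η < 1)
    (ρ X : Matrix (Fin D) (Fin D) ℂ) (hρ : IsDensity ρ) (hX : X.PosSemidef)
    (hpos : 0 < ((X * ρ).trace).re) :
    Real.log ((X * ρ).trace).re ≤
      (1 / η) * ((ρ * matLog (((1 - η : ℝ) : ℂ) • 1 + ((η : ℝ) : ℂ) • X)).trace).re +
        ((matLog (1 + ((η / (1 - η) : ℝ) : ℂ) • X)).trace).re := by
  have hXh : X.IsHermitian := hX.isHermitian
  have hρU := hρ.conj_unitary hXh.eigenvectorUnitary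
  have hA : ((1 - η : ℝ) : ℂ) • 1 + ((η : ℝ) : ℂ) • X = algebraMap ℝ _ (1 - η) + η • X := by
    rw [Algebra.algebraMap_eq_smul_one, ← Complex.coe_algebraMap, algebraMap_smul, algebraMap_smul]
  have hB : 1 + ((η / (1 - η) : ℝ) : ℂ) • X = algebraMap ℝ _ 1 + (η / (1 - η)) • X := by
    rw [map_one, ← Complex.coe_algebraMap, algebraMap_smul]
  have hXρ : (X * ρ).trace = (ρ * cfc (id : ℝ → ℝ) X).trace := by
    rw [trace_mul_comm, cfc_id ℝ X]
  rw [hXρ, hXh.trace_mul_cfc] at hpos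
  rw [matLog, hA, hB, matFun_algebraMap_add_smul _ hXh, matFun_algebraMap_add_smul _ hXh, hXρ,
    hXh.trace_mul_cfc, hXh.trace_mul_cfc, hXh.trace_cfc]
  simp only [id_eq, Complex.coe_algebraMap, Complex.re_sum, Complex.re_mul_ofReal,
    Complex.ofReal_re] at hpos ⊢
  exact reverse_jensen_log hη0 hη1 hρU.re_diag_nonneg hρU.sum_re_diag hX.eigenvalues_nonneg hpos
end
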